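/- arXiv:2106.00114 — 3 statements merged into one kernel-verified Lean document; each statement's English description precedes it below -/
import Mathlib

section
/- Let ν be a probability measure on a standard Borel space (S, B), G ⊆ B a sub-σ-field, and K a regular conditional distribution for ν given G. Then there exists a set F ∈ σ(K) with ν(F) = 1 such that K(x)(B) = δ_x(B) for every B ∈ σ(K) and every x ∈ F, where δ_x denotes the unit mass at x. -/
open MeasureTheory ProbabilityTheory Filter Set ENNReal NNReal

noncomputable section

variable {Ω S : Type*}

/-- `K` is a regular conditional distribution for `ν` given the sub-σ-field `G`. -/
def IsRCD [mS : MeasurableSpace S] (ν : Measure S) (K : S → Measure S)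
    (G : MeasurableSpace S) : Prop :=
  G ≤ mS ∧ @Measurable S (@Measure S mS) mS inferInstance K ∧
    (∀ x, IsProbabilityMeasure (K x)) ∧
    (∀ A : Set S, MeasurableSet[mS] A → Measurable[G] fun x => K x A) ∧
    (∀ A : Set S, MeasurableSet[mS] A → ∀ g : Set S, MeasurableSet[G] g →
      ν (A ∩ g) = ∫⁻ x in g, K x A ∂ν)

/-- `σ(X_0, …, X_{n-1})`, the σ-field generated by the first `n` variables. -/
def Filtr [mS : MeasurableSpace S] (X : ℕ → Ω → S) (n : ℕ) : MeasurableSpace Ω :=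
  ⨆ i : Fin n, mS.comap (X i)

/-- The predictive probability `(θ ν(A) + ∑_{i<n} K(X_i)(A)) / (n + θ)`. -/
def predReal [MeasurableSpace S] (X : ℕ → Ω → S) (ν : Measure S) (θ : ℝ)
    (K : S → Measure S) (n : ℕ) (ω : Ω) (A : Set S) : ℝ :=
  (θ * (ν A).toReal + ∑ i ∈ Finset.range n, (K (X i ω) A).toReal) / (n + θ)

/-- Condition (1.1): `X_1 ∼ ν` and the predictive distributions are
`(θ ν + ∑_{i≤n} K(X_i))/(n+θ)`. -/
def Cond11 [MeasurableSpace Ω] [MeasurableSpace S] (P : Measure Ω) (X : ℕ → Ω → S)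
    (ν : Measure S) (θ : ℝ) (K : S → Measure S) : Prop :=
  (∀ n, Measurable (X n)) ∧ P.map (X 0) = ν ∧
    ∀ n : ℕ, 1 ≤ n → ∀ A : Set S, MeasurableSet A →
      P[((X n) ⁻¹' A).indicator (fun _ => (1 : ℝ)) | Filtr X n]
        =ᵐ[P] fun ω => predReal X ν θ K n ω A

/-- `X ∈ L`: condition (1.1) holds and `K` is an r.c.d. for `ν` given some sub-σ-field. -/
def MemL [MeasurableSpace Ω] [mS : MeasurableSpace S] (P : Measure Ω) (X : ℕ → Ω → S)
    (ν : Measure S) (θ : ℝ) (K : S → Measure S) : Prop :=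
  Cond11 P X ν θ K ∧ ∃ G : MeasurableSpace S, IsRCD (mS := mS) ν K G

/-- `μ` is a random probability measure directing `X`:
`μ(A) = lim_n (1/n) ∑_{i≤n} 1_A(X_i)` a.s. for every `A`. -/
def IsDirecting [MeasurableSpace Ω] [MeasurableSpace S] (P : Measure Ω) (X : ℕ → Ω → S)
    (μ : Ω → Measure S) : Prop :=
  Measurable μ ∧ (∀ ω, IsProbabilityMeasure (μ ω)) ∧
    ∀ A : Set S, MeasurableSet A →
      ∀ᵐ ω ∂P, Tendsto
        (fun n : ℕ => (∑ i ∈ Finset.range n, A.indicator (fun _ => (1 : ℝ)) (X i ω)) / n)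
        atTop (nhds ((μ ω A).toReal))

/-- Exchangeability of the sequence `X`. -/
def Exchangeable [MeasurableSpace Ω] [MeasurableSpace S] (P : Measure Ω)
    (X : ℕ → Ω → S) : Prop :=
  ∀ n : ℕ, ∀ τ : Equiv.Perm (Fin n),
    P.map (fun ω (i : Fin n) => X (τ i) ω) = P.map (fun ω (i : Fin n) => X i ω)

/-- The Beta(1, θ) law on ℝ, with density `w ↦ θ (1-w)^(θ-1)` on `(0,1)`. -/
def betaOneMeasure (θ : ℝ) : Measure ℝ :=
  (volume : Measure ℝ).withDensity
    ((Set.Ioo (0 : ℝ) 1).indicator fun w => ENNReal.ofReal (θ * (1 - w) ^ (θ - 1)))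

/-- `σ` is the stick-breaking law with parameter `θ` on sequences:
the law of `(T_n)` where `T_n = W_n ∏_{i<n} (1 - W_i)` and `(W_n)` is i.i.d. Beta(1, θ). -/
def IsStickBreakingLaw (θ : ℝ) (σ : Measure (ℕ → ℝ)) : Prop :=
  ∃ (Ω' : Type) (_ : MeasurableSpace Ω') (Q : Measure Ω') (W : ℕ → Ω' → ℝ),
    IsProbabilityMeasure Q ∧ (∀ n, Measurable (W n)) ∧
    iIndepFun W Q ∧ (∀ n, Q.map (W n) = betaOneMeasure θ) ∧
    σ = Q.map fun ω' (j : ℕ) => W j ω' * ∏ i ∈ Finset.range j, (1 - W i ω')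

/-- `(V_n)` has the stick-breaking distribution with parameter `θ`. -/
def IsStickBreaking [MeasurableSpace Ω] (P : Measure Ω) (θ : ℝ) (V : ℕ → Ω → ℝ) : Prop :=
  ∃ σ : Measure (ℕ → ℝ), IsStickBreakingLaw θ σ ∧ P.map (fun ω (j : ℕ) => V j ω) = σ

/-- The random measure `∑_j V_j K(Z_j)`. -/
def mixSum [MeasurableSpace S] (K : S → Measure S) (V : ℕ → Ω → ℝ) (Z : ℕ → Ω → S)
    (ω : Ω) : Measure S :=
  Measure.sum fun j => ENNReal.ofReal (V j ω) • K (Z j ω)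

/-- `σ(K)`: the sub-σ-field of `S` generated by the kernel `K`. -/
def sigmaK [mS : MeasurableSpace S] (K : S → Measure S) : MeasurableSpace S :=
  MeasurableSpace.comap K inferInstance

/-- `γ` is the `p`-dimensional Gaussian law `N_p(0, M)`: every linear functional
`y ↦ ∑ i, b i * y i` has the one-dimensional Gaussian law with mean `0` and
variance `bᵀ M b`. -/
def IsGaussN {p : ℕ} (M : Matrix (Fin p) (Fin p) ℝ)
    (γ : Measure (EuclideanSpace ℝ (Fin p))) : Prop :=
  ∀ b : Fin p → ℝ,
    γ.map (fun y => ∑ i, b i * y i) =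
      gaussianReal 0 (Real.toNNReal (∑ i, ∑ j, b i * M i j * b j))

/-- The matrix of second moments `(∫ y_i y_j dλ)_{i,j}` of a measure `λ` on `ℝ^p`. -/
def covMatrix {p : ℕ} (lam : Measure (EuclideanSpace ℝ (Fin p))) :
    Matrix (Fin p) (Fin p) ℝ :=
  Matrix.of fun i j => ∫ y, y i * y j ∂lam

/-- The σ-field of measurable sets invariant under every `f i`. -/
def invariantSigma {ι : Type*} [mS : MeasurableSpace S] (f : ι → S → S) :
    MeasurableSpace S where
  MeasurableSet' A := MeasurableSet[mS] A ∧ ∀ i, f i ⁻¹' A = A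
  measurableSet_empty := ⟨MeasurableSet.empty, fun _ => Set.preimage_empty⟩
  measurableSet_compl A hA := ⟨hA.1.compl, fun i => by rw [Set.preimage_compl, hA.2 i]⟩
  measurableSet_iUnion g hg := ⟨MeasurableSet.iUnion fun k => (hg k).1,
    fun i => by rw [Set.preimage_iUnion]; exact Set.iUnion_congr fun k => (hg k).2 i⟩


/-! Since `K(·)(B)` is `G`-measurable, `σ(K) ⊆ G`, and the r.c.d. property applied to `B ∈ G`
forces `K(·)(B) = 1_B` `ν`-a.e. To get a single null set for all `B ∈ σ(K)` at once, note that
`σ(K)` is countably generated: on a standard Borel space a probability measure is determined by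
its values on a countable π-system, so `σ(K)` is generated by countably many evaluations
`x ↦ K x T`. Off the countably many exceptional null sets, `K x` agrees with `δ_x` on a countable
generating family of `σ(K)`, hence on all of `σ(K)`. -/

open MeasurableSpace

theorem MeasurableSpace.exists_isPiSystem_generateFrom_eq (α : Type*) [m : MeasurableSpace α]
    [CountablyGenerated α] :
    ∃ T : Finset ℕ → Set α, IsPiSystem (range T) ∧ m = generateFrom (range T) := by
  refine ⟨fun t => ⋂ i ∈ t, natGeneratingSequence α i, ?_, le_antisymm ?_ ?_⟩
  · rintro _ ⟨s, rfl⟩ _ ⟨t, rfl⟩ -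
    exact ⟨s ∪ t, Finset.set_biInter_inter _ _ _⟩
  · conv_lhs => rw [← generateFrom_natGeneratingSequence α]
    refine generateFrom_le fun _ ⟨i, hi⟩ => measurableSet_generateFrom ⟨{i}, ?_⟩
    simpa using hi
  · exact generateFrom_le fun _ ⟨t, ht⟩ =>
      ht ▸ t.measurableSet_biInter fun i _ => measurableSet_natGeneratingSequence i

theorem MeasurableSpace.comap_measure_eq_comap_eval {α β ι : Type*} [mβ : MeasurableSpace β]
    {μ : α → Measure β} [∀ a, IsProbabilityMeasure (μ a)] {T : ι → Set β}
    (hpi : IsPiSystem (range T)) (hgen : mβ = generateFrom (range T)) :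
    MeasurableSpace.comap μ inferInstance =
      MeasurableSpace.comap (fun a i => μ a (T i))
        (inferInstance : MeasurableSpace (ι → ℝ≥0∞)) := by
  refine le_antisymm ?_ ?_
  · let := MeasurableSpace.comap (fun a i => μ a (T i))
      (inferInstance : MeasurableSpace (ι → ℝ≥0∞))
    refine (Measurable.measure_of_isPiSystem_of_isProbabilityMeasure hgen hpi ?_).comap_le
    rintro _ ⟨i, rfl⟩
    exact (comap_measurable fun a i => μ a (T i)).eval
  · let := MeasurableSpace.comap μ inferInstance
    refine Measurable.comap_le (measurable_pi_lambda _ fun i => ?_)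
    have hT : MeasurableSet (T i) := hgen ▸ measurableSet_generateFrom ⟨i, rfl⟩
    exact (Measure.measurable_coe hT).comp (comap_measurable μ)

theorem countablyGenerated_sigmaK [MeasurableSpace S] [CountablyGenerated S]
    {K : S → Measure S} [∀ x, IsProbabilityMeasure (K x)] :
    @CountablyGenerated S (sigmaK K) := by
  obtain ⟨T, hpi, hgen⟩ := exists_isPiSystem_generateFrom_eq S
  rw [sigmaK, comap_measure_eq_comap_eval hpi hgen]
  exact CountablyGenerated.comap _

/-- No π-system is needed here: a probability measure that agrees with `dirac x` takes only the
values `0` and `1` on those sets, and this is preserved by countable unions. -/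
theorem MeasureTheory.Measure.apply_eq_dirac_of_generateFrom [MeasurableSpace S] {μ : Measure S}
    [IsProbabilityMeasure μ] {x : S} {C : Set (Set S)} (hCm : ∀ B ∈ C, MeasurableSet B)
    (hC : ∀ B ∈ C, μ B = dirac x B) {B : Set S} (hB : MeasurableSet[generateFrom C] B) :
    μ B = dirac x B := by
  have hle : generateFrom C ≤ ‹_› := generateFrom_le hCm
  induction B, hB using generateFrom_induction with
  | hC B hB => exact hC B hB
  | empty => simp
  | compl B hB ih =>
    rw [measure_compl (hle _ hB) (measure_ne_top _ _),
      measure_compl (hle _ hB) (measure_ne_top _ _), ih, measure_univ, measure_univ]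
  | iUnion s hs ih =>
    by_cases hx : ∃ n, x ∈ s n
    · obtain ⟨n, hn⟩ := hx
      rw [dirac_apply_of_mem (mem_iUnion.2 ⟨n, hn⟩)]
      refine le_antisymm prob_le_one ?_
      calc 1 = μ (s n) := by rw [ih n, dirac_apply_of_mem hn]
        _ ≤ μ (⋃ i, s i) := measure_mono (subset_iUnion s n)
    · push Not at hx
      have hsm : ∀ n, MeasurableSet (s n) := fun n => hle _ (hs n)
      rw [dirac_apply' x (MeasurableSet.iUnion hsm), indicator_of_notMem (by simpa using hx),
        measure_iUnion_null fun n => ?_]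
      rw [ih n, dirac_apply' x (hsm n), indicator_of_notMem (hx n)]

theorem exists_forall_sigmaK_apply_eq_dirac [mS : MeasurableSpace S] [CountablyGenerated S]
    {ν : Measure S} [IsProbabilityMeasure ν] {K : S → Measure S}
    [∀ x, IsProbabilityMeasure (K x)] (hK : Measurable K)
    (hae : ∀ B, MeasurableSet[sigmaK K] B → ∀ᵐ x ∂ν, K x B = Measure.dirac x B) :
    ∃ F : Set S, MeasurableSet[sigmaK K] F ∧ ν F = 1 ∧
      ∀ B : Set S, MeasurableSet[sigmaK K] B → ∀ x ∈ F, K x B = Measure.dirac x B := by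
  have hσ_le : sigmaK K ≤ mS := hK.comap_le
  obtain ⟨C, hC, hgen⟩ := (countablyGenerated_sigmaK (K := K)).isCountablyGenerated
  have hCσ : ∀ B ∈ C, MeasurableSet[sigmaK K] B := fun B hB =>
    hgen ▸ measurableSet_generateFrom hB
  have hD : ∀ B ∈ C, MeasurableSet[sigmaK K] {x | K x B = Measure.dirac x B} := by
    intro B hB
    have hBm : MeasurableSet B := hσ_le B (hCσ B hB)
    simp_rw [Measure.dirac_apply' _ hBm]
    exact measurableSet_eq_fun ((Measure.measurable_coe hBm).comp (comap_measurable K))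
      (measurable_const.indicator (hCσ B hB))
  set F := ⋂ B ∈ C, {x | K x B = Measure.dirac x B}
  have hF : MeasurableSet[sigmaK K] F := MeasurableSet.biInter hC hD
  refine ⟨F, hF, ?_, fun B hB x hx => ?_⟩
  · have hF_ae : ∀ᵐ x ∂ν, x ∈ F := by
      simpa [F] using (ae_ball_iff hC).2 fun B hB => hae B (hCσ B hB)
    rw [← measure_univ (μ := ν)]
    exact (ae_iff_measure_eq (hσ_le _ hF).nullMeasurableSet).1 hF_ae
  · exact Measure.apply_eq_dirac_of_generateFrom (fun B hB => hσ_le _ (hCσ B hB))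
      (fun B hB => mem_iInter₂.1 hx B hB) (hgen ▸ hB)

section RCD

-- `G` comes first so that instance resolution picks `mS`, not `G`, as the σ-field of `S`.
variable {G : MeasurableSpace S} [mS : MeasurableSpace S] {ν : Measure S} {K : S → Measure S}

theorem IsRCD.sigmaK_le (hK : IsRCD (mS := mS) ν K G) : sigmaK K ≤ G := by
  obtain ⟨-, -, -, hKG, -⟩ := hK
  exact (@Measure.measurable_of_measurable_coe S S mS G K hKG).comap_le

theorem IsRCD.ae_apply_eq_dirac [IsFiniteMeasure ν] (hK : IsRCD (mS := mS) ν K G) {B : Set S}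
    (hB : MeasurableSet[G] B) : ∀ᵐ x ∂ν, K x B = Measure.dirac x B := by
  obtain ⟨hGle, -, -, hKG, hcond⟩ := hK
  have hBm : MeasurableSet B := hGle B hB
  have hK_meas : Measurable[G] fun x => K x B := hKG B hBm
  have hind_meas : Measurable[G] (B.indicator 1 : S → ℝ≥0∞) := measurable_const.indicator hB
  have htrim : (fun x => K x B) =ᵐ[ν.trim hGle] B.indicator 1 := by
    refine ae_eq_of_forall_setLIntegral_eq_of_sigmaFinite hK_meas hind_meas fun g hg _ => ?_
    rw [setLIntegral_trim hGle hK_meas hg, setLIntegral_trim hGle hind_meas hg,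
      ← hcond B hBm g hg, lintegral_indicator_one hBm, Measure.restrict_apply hBm]
  filter_upwards [ae_eq_of_ae_eq_trim htrim] with x hx
  rw [hx, Measure.dirac_apply' x hBm]

end RCD

theorem stmt_0 {S : Type*} [mS : MeasurableSpace S] [StandardBorelSpace S]
    (ν : Measure S) [IsProbabilityMeasure ν] (K : S → Measure S)
    (hK : ∃ G : MeasurableSpace S, IsRCD (mS := mS) ν K G) :
    ∃ F : Set S, MeasurableSet[sigmaK K] F ∧ ν F = 1 ∧
      ∀ B : Set S, MeasurableSet[sigmaK K] B → ∀ x ∈ F, K x B = Measure.dirac x B := by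
  obtain ⟨G, hK⟩ := hK
  have hKprob : ∀ x, IsProbabilityMeasure (K x) := hK.2.2.1
  exact exists_forall_sigmaK_apply_eq_dirac (mS := mS) hK.2.1
    fun B hB => hK.ae_apply_eq_dirac (mS := mS) (hK.sigmaK_le (mS := mS) B hB)
end
end

section
/- Let ν be a probability measure on a standard Borel space (S, B) and K a regular conditional distribution for ν given a sub-σ-field G ⊆ B. Then there exists a set F ∈ σ(K) with ν(F) = 1 such that ∫_A K(y)(B) K(x)(dy) = K(x)(A) · K(x)(B) for every x ∈ F and all A, B ∈ B. -/
open MeasureTheory ProbabilityTheory Filter Set ENNReal NNReal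

noncomputable section

variable {Ω S : Type*}

/-! For fixed measurable `A`, `B`, both `x ↦ ∫_A K(y)(B) K(x)(dy)` and `x ↦ K(x)(A) K(x)(B)` are
`G`-measurable versions of `E_ν[1_A K(·)(B) | G]`, hence agree `ν`-a.e. Doing this for `A`, `B` in a
countable generating π-system `C` gives the `σ(K)`-measurable full-measure set
`F = K⁻¹ {p | the identity holds for p on C × C}`; for `x ∈ F` the measures `K(x) ⊗ K` and
`K(x) × K(x)` on `S × S` agree on `C × C`, hence everywhere. -/

namespace MeasurableSpace

variable {S : Type*} [mS : MeasurableSpace S]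

theorem exists_countable_isPiSystem_generateFrom_eq [CountablyGenerated S] :
    ∃ C : Set (Set S), C.Countable ∧ IsPiSystem C ∧ univ ∈ C ∧ generateFrom C = mS := by
  refine ⟨sInter '' {t | t.Finite ∧ t ⊆ countableGeneratingSet S},
    ((countable_ofPred_finite_subset countable_countableGeneratingSet).image _), ?_,
    ⟨∅, ⟨finite_empty, empty_subset _⟩, sInter_empty⟩, le_antisymm ?_ ?_⟩
  · rintro _ ⟨t₁, ⟨ht₁, ht₁g⟩, rfl⟩ _ ⟨t₂, ⟨ht₂, ht₂g⟩, rfl⟩ -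
    exact ⟨t₁ ∪ t₂, ⟨ht₁.union ht₂, union_subset ht₁g ht₂g⟩, sInter_union t₁ t₂⟩
  · refine generateFrom_le ?_
    rintro _ ⟨t, ⟨ht, htg⟩, rfl⟩
    exact ht.measurableSet_sInter fun u hu => measurableSet_countableGeneratingSet (htg hu)
  · conv_lhs => rw [← generateFrom_countableGeneratingSet (α := S)]
    exact generateFrom_mono fun s hs =>
      ⟨{s}, ⟨finite_singleton s, singleton_subset_iff.2 hs⟩, sInter_singleton s⟩

end MeasurableSpace

namespace IsRCD

variable {S : Type*} {G : MeasurableSpace S} [mS : MeasurableSpace S] {ν : Measure S}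
  {K : S → Measure S}

lemma measurable (h : IsRCD ν K G) : Measurable K := h.2.1

lemma isProbabilityMeasure (h : IsRCD ν K G) (x : S) : IsProbabilityMeasure (K x) := h.2.2.1 x

lemma measurable_apply (h : IsRCD ν K G) {A : Set S} (hA : MeasurableSet A) :
    Measurable[G] fun x => K x A :=
  h.2.2.2.1 A hA

lemma measurable_cond (h : IsRCD ν K G) : Measurable[G] K :=
  @Measure.measurable_of_measurable_coe _ _ _ G K h.2.2.2.1

lemma restrict (h : IsRCD ν K G) {g : Set S} (hg : MeasurableSet[G] g) :
    IsRCD (ν.restrict g) K G := by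
  obtain ⟨hle, hK, hKprob, hKG, hrcd⟩ := h
  refine ⟨hle, hK, hKprob, hKG, fun A hA g' hg' => ?_⟩
  rw [Measure.restrict_apply (hA.inter (hle g' hg')), inter_assoc,
    Measure.restrict_restrict (hle g' hg'), hrcd A hA _ (hg'.inter hg)]

lemma bind_eq (h : IsRCD ν K G) : ν.bind K = ν := by
  ext A hA
  rw [Measure.bind_apply hA h.measurable.aemeasurable, ← setLIntegral_univ,
    ← h.2.2.2.2 A hA univ MeasurableSet.univ, inter_univ]

lemma lintegral_lintegral (h : IsRCD ν K G) {f : S → ℝ≥0∞} (hf : Measurable f) :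
    ∫⁻ x, ∫⁻ y, f y ∂K x ∂ν = ∫⁻ x, f x ∂ν := by
  conv_rhs => rw [← h.bind_eq]
  exact (Measure.lintegral_bind h.measurable.aemeasurable hf.aemeasurable).symm

lemma lintegral_mul_apply (h : IsRCD ν K G) {ψ : S → ℝ≥0∞} (hψ : Measurable[G] ψ)
    {A : Set S} (hA : MeasurableSet A) :
    ∫⁻ x, ψ x * K x A ∂ν = ∫⁻ x in A, ψ x ∂ν := by
  obtain ⟨hle, -, -, hKG, hrcd⟩ := h
  have hdens : (ν.trim hle).withDensity (K · A) = (ν.restrict A).trim hle := by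
    refine @Measure.ext _ G _ _ fun g hg => ?_
    rw [withDensity_apply _ hg, setLIntegral_trim hle (hKG A hA) hg, ← hrcd A hA g hg,
      trim_measurableSet_eq hle hg, Measure.restrict_apply (hle g hg), inter_comm]
  calc ∫⁻ x, ψ x * K x A ∂ν = ∫⁻ x, K x A * ψ x ∂ν.trim hle := by
        rw [lintegral_trim hle (f := fun x => K x A * ψ x) ((hKG A hA).mul hψ)]
        simp_rw [mul_comm]
    _ = ∫⁻ x, ψ x ∂(ν.restrict A).trim hle := by
        rw [← hdens, lintegral_withDensity_eq_lintegral_mul _ (hKG A hA) hψ]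
        rfl
    _ = ∫⁻ x in A, ψ x ∂ν := lintegral_trim hle hψ

lemma measurable_setLIntegral (h : IsRCD ν K G) {f : S → ℝ≥0∞} (hf : Measurable f)
    {A : Set S} (hA : MeasurableSet A) : Measurable[G] fun x => ∫⁻ y in A, f y ∂K x := by
  simp_rw [← lintegral_indicator hA]
  exact (Measure.measurable_lintegral (hf.indicator hA)).comp h.measurable_cond

lemma ae_setLIntegral_apply_eq_mul [IsFiniteMeasure ν] (h : IsRCD ν K G) {A B : Set S}
    (hA : MeasurableSet A) (hB : MeasurableSet B) :
    ∀ᵐ x ∂ν, ∫⁻ y in A, K y B ∂K x = K x A * K x B := by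
  have hKB : Measurable fun y => K y B := (Measure.measurable_coe hB).comp h.measurable
  have hle := h.1
  refine (ae_eq_condLExp hle ν (A.indicator fun y => K y B)
    (h.measurable_setLIntegral hKB hA) fun g hg => ?_).trans
    (ae_eq_condLExp hle ν _ (Y := fun x => K x A * K x B)
      ((h.measurable_apply hA).mul (h.measurable_apply hB)) fun g hg => ?_).symm
  · rw [← (h.restrict hg).lintegral_lintegral (hKB.indicator hA)]
    simp_rw [lintegral_indicator hA]
  · rw [lintegral_indicator hA, ← (h.restrict hg).lintegral_mul_apply (h.measurable_apply hB) hA]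
    simp_rw [mul_comm]

lemma ae_forall_setLIntegral_apply_eq_mul [IsFiniteMeasure ν] (h : IsRCD ν K G)
    {C : Set (Set S)} (hC : C.Countable) (hCm : ∀ A ∈ C, MeasurableSet A) :
    ∀ᵐ x ∂ν, ∀ A ∈ C, ∀ B ∈ C, ∫⁻ y in A, K y B ∂K x = K x A * K x B :=
  (ae_ball_iff hC).2 fun A hA => (ae_ball_iff hC).2 fun B hB =>
    h.ae_setLIntegral_apply_eq_mul (hCm A hA) (hCm B hB)

end IsRCD

section PiSystem

variable {S : Type*} [mS : MeasurableSpace S] {C : Set (Set S)}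

lemma setLIntegral_apply_eq_mul_of_isPiSystem {κ : Kernel S S} [IsSFiniteKernel κ]
    (hgen : MeasurableSpace.generateFrom C = mS) (hC : IsPiSystem C) (huniv : univ ∈ C)
    {p : Measure S} [IsFiniteMeasure p] (hp : ∀ A ∈ C, ∀ B ∈ C, ∫⁻ y in A, κ y B ∂p = p A * p B)
    {A B : Set S} (hA : MeasurableSet A) (hB : MeasurableSet B) :
    ∫⁻ y in A, κ y B ∂p = p A * p B := by
  have hspan : p.FiniteSpanningSetsIn C :=
    ⟨fun _ => univ, fun _ => huniv, fun _ => measure_lt_top _ _, iUnion_const _⟩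
  have hprod : p.prod p = p ⊗ₘ κ := Measure.prod_eq_generateFrom hgen hgen hC hC hspan hspan
    fun s hs t ht => by
      rw [Measure.compProd_apply_prod (hgen ▸ .basic s hs) (hgen ▸ .basic t ht)]
      exact hp s hs t ht
  rw [← Measure.compProd_apply_prod hA hB, ← hprod, Measure.prod_prod]

lemma measurableSet_setOf_forall_setLIntegral_eq_mul {K : S → Measure S} (hK : Measurable K)
    (hCc : C.Countable) (hCm : ∀ A ∈ C, MeasurableSet A) :
    MeasurableSet {p : Measure S | ∀ A ∈ C, ∀ B ∈ C, ∫⁻ y in A, K y B ∂p = p A * p B} := by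
  simp only [ofPred_forall]
  refine .biInter hCc fun A hA => .biInter hCc fun B hB => measurableSet_eq_fun ?_ ?_
  · simp_rw [← lintegral_indicator (hCm A hA)]
    exact Measure.measurable_lintegral
      (((Measure.measurable_coe (hCm B hB)).comp hK).indicator (hCm A hA))
  · exact (Measure.measurable_coe (hCm A hA)).mul (Measure.measurable_coe (hCm B hB))

end PiSystem

theorem stmt_1 {S : Type*} [mS : MeasurableSpace S] [StandardBorelSpace S]
    (ν : Measure S) [IsProbabilityMeasure ν] (K : S → Measure S)
    (hK : ∃ G : MeasurableSpace S, IsRCD (mS := mS) ν K G) :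
    ∃ F : Set S, MeasurableSet[sigmaK K] F ∧ ν F = 1 ∧
      ∀ x ∈ F, ∀ A B : Set S, MeasurableSet A → MeasurableSet B →
        ∫⁻ y in A, K y B ∂(K x) = K x A * K x B := by
  obtain ⟨C, hCc, hC, huniv, hgen⟩ :=
    MeasurableSpace.exists_countable_isPiSystem_generateFrom_eq (S := S)
  have hCm : ∀ A ∈ C, MeasurableSet A := fun A hA => hgen ▸ .basic A hA
  have hG := hK.choose_spec
  set T := {p : Measure S | ∀ A ∈ C, ∀ B ∈ C, ∫⁻ y in A, K y B ∂p = p A * p B}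
  have hT : MeasurableSet T :=
    measurableSet_setOf_forall_setLIntegral_eq_mul hG.measurable hCc hCm
  have hae : ∀ᵐ x ∂ν, K x ∈ T := hG.ae_forall_setLIntegral_apply_eq_mul hCc hCm
  refine ⟨K ⁻¹' T, ⟨T, hT, rfl⟩, ?_, fun x hx A B hA hB => ?_⟩
  · rwa [ae_iff_measure_eq (hG.measurable hT).nullMeasurableSet, measure_univ] at hae
  · let κ : Kernel S S := ⟨K, hG.measurable⟩
    have : IsMarkovKernel κ := ⟨hG.isProbabilityMeasure⟩
    have := hG.isProbabilityMeasure x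
    exact setLIntegral_apply_eq_mul_of_isPiSystem (κ := κ) hgen hC huniv hx hA hB

end
end

section
/- Suppose X satisfies condition (1.1) with probability measure ν, constant θ > 0 and kernel K, and suppose in addition that ∫_S K(y)(A) ν(dy) = ν(A) for every A ∈ B. Then X_n ∼ ν for every n ≥ 1. -/
open MeasureTheory ProbabilityTheory Filter Set ENNReal NNReal

noncomputable section

variable {Ω S : Type*}

/-! Strong induction on `n`: integrating (1.1) gives
`P(X_n ∈ A) = (θ ν(A) + ∑_{i<n} E[K(X_i)(A)]) / (n + θ)`, and each `E[K(X_i)(A)]` equals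
`∫ K(y)(A) ν(dy) = ν(A)` because `X_i ∼ ν` by induction and `ν` is invariant under `K`. -/

theorem filtr_le [MeasurableSpace Ω] [MeasurableSpace S] {X : ℕ → Ω → S}
    (hX : ∀ n, Measurable (X n)) (n : ℕ) : Filtr X n ≤ ‹MeasurableSpace Ω› :=
  iSup_le fun i => (hX i).comap_le

theorem measureReal_eq_integral_of_condExp_indicator_ae_eq {m m₀ : MeasurableSpace Ω}
    {P : Measure[m₀] Ω} [IsFiniteMeasure P] (hm : m ≤ m₀) {B : Set Ω}
    (hB : MeasurableSet[m₀] B) {f : Ω → ℝ}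
    (hf : P[B.indicator (fun _ => (1 : ℝ)) | m] =ᵐ[P] f) :
    P.real B = ∫ ω, f ω ∂P := by
  have : IsFiniteMeasure (P.trim hm) := isFiniteMeasure_trim hm
  rw [← integral_indicator_one hB, ← integral_congr_ae hf, integral_condExp hm]
  rfl

theorem integrable_measureReal_comp [MeasurableSpace Ω] [MeasurableSpace S]
    {P : Measure Ω} [IsFiniteMeasure P] {Y : Ω → S} {K : S → Measure S}
    (hY : Measurable Y) (hK : Measurable K) (hKp : ∀ x, IsProbabilityMeasure (K x))
    {A : Set S} (hA : MeasurableSet A) :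
    Integrable (fun ω => (K (Y ω)).real A) P := by
  refine .of_bound (((Measure.measurable_coe hA).comp (hK.comp hY)).ennreal_toReal
    |>.aestronglyMeasurable) 1 (.of_forall fun ω => ?_)
  rw [Real.norm_of_nonneg measureReal_nonneg]
  exact measureReal_le_one

theorem integral_measureReal_comp_of_map_eq [MeasurableSpace Ω] [MeasurableSpace S]
    {P : Measure Ω} {Y : Ω → S} {ν : Measure S} {K : S → Measure S}
    (hY : Measurable Y) (hK : Measurable K) (hPY : P.map Y = ν)
    {A : Set S} (hA : MeasurableSet A) (hKA : ∀ x, K x A ≠ ∞) :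
    ∫ ω, (K (Y ω)).real A ∂P = (∫⁻ y, K y A ∂ν).toReal := by
  have hKA_meas : Measurable fun y => K y A := (Measure.measurable_coe hA).comp hK
  rw [← hPY, ← integral_toReal hKA_meas.aemeasurable (.of_forall fun y => (hKA y).lt_top),
    integral_map hY.aemeasurable hKA_meas.ennreal_toReal.aestronglyMeasurable]
  rfl

theorem integral_predReal_of_map_eq [MeasurableSpace Ω] [MeasurableSpace S]
    {P : Measure Ω} [IsProbabilityMeasure P] {X : ℕ → Ω → S} {ν : Measure S} {θ : ℝ}
    {K : S → Measure S} (hXm : ∀ n, Measurable (X n)) (hK : Measurable K)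
    (hKp : ∀ x, IsProbabilityMeasure (K x)) {n : ℕ} (hnθ : (n : ℝ) + θ ≠ 0)
    (hlaw : ∀ i < n, P.map (X i) = ν) {A : Set S} (hA : MeasurableSet A)
    (hmean : ∫⁻ y, K y A ∂ν = ν A) :
    ∫ ω, predReal X ν θ K n ω A ∂P = ν.real A := by
  have hterm : ∀ i ∈ Finset.range n, ∫ ω, (K (X i ω)).real A ∂P = ν.real A := fun i hi => by
    rw [integral_measureReal_comp_of_map_eq (hXm i) hK (hlaw i (Finset.mem_range.mp hi)) hA
      (fun x => measure_ne_top _ _), hmean]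
    rfl
  have hint : ∀ i ∈ Finset.range n, Integrable (fun ω => (K (X i ω)).real A) P :=
    fun i _ => integrable_measureReal_comp (hXm i) hK hKp hA
  simp only [predReal, ← measureReal_def]
  rw [integral_div, integral_add (integrable_const _) (integrable_finsetSum _ hint),
    integral_finsetSum _ hint, Finset.sum_congr rfl hterm, integral_const]
  simp only [probReal_univ, one_smul, Finset.sum_const, Finset.card_range, nsmul_eq_mul]
  field_simp
  ring

theorem stmt_5_general {Ω S : Type*} [MeasurableSpace Ω] [mS : MeasurableSpace S]
    (P : Measure Ω) [IsProbabilityMeasure P] (X : ℕ → Ω → S) (ν : Measure S)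
    [IsProbabilityMeasure ν] (θ : ℝ) (hθ : 0 < θ) (K : S → Measure S)
    (hKm : Measurable K) (hKp : ∀ x, IsProbabilityMeasure (K x))
    (hX : Cond11 P X ν θ K)
    (hmean : ∀ A : Set S, MeasurableSet A → ∫⁻ y, K y A ∂ν = ν A) :
    ∀ n : ℕ, P.map (X n) = ν := by
  obtain ⟨hXm, hX0, hpred⟩ := hX
  intro n
  induction n using Nat.strong_induction_on with
  | _ n ih =>
    rcases n with _ | n
    · exact hX0
    refine Measure.ext fun A hA => ?_
    have hreal : P.real (X (n + 1) ⁻¹' A) = ν.real A := by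
      rw [measureReal_eq_integral_of_condExp_indicator_ae_eq (filtr_le hXm _) (hXm _ hA)
        (hpred _ n.succ_pos A hA)]
      exact integral_predReal_of_map_eq hXm hKm hKp (by positivity) ih hA (hmean A hA)
    rw [Measure.map_apply (hXm _) hA]
    exact (measureReal_eq_measureReal_iff (measure_ne_top _ _) (measure_ne_top _ _)).mp hreal

theorem stmt_5 {Ω S : Type*} [MeasurableSpace Ω] [mS : MeasurableSpace S] [StandardBorelSpace S]
    (P : Measure Ω) [IsProbabilityMeasure P] (X : ℕ → Ω → S) (ν : Measure S)
    [IsProbabilityMeasure ν] (θ : ℝ) (hθ : 0 < θ) (K : S → Measure S)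
    (hKm : Measurable K) (hKp : ∀ x, IsProbabilityMeasure (K x))
    (hX : Cond11 P X ν θ K)
    (hmean : ∀ A : Set S, MeasurableSet A → ∫⁻ y, K y A ∂ν = ν A) :
    ∀ n : ℕ, P.map (X n) = ν :=
  stmt_5_general (mS := mS) P X ν θ hθ K hKm hKp hX hmean

end
end
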